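/- For every a ∈ ℝ and c ∈ ℂ, the fiber of F⁺ satisfies (F⁺)⁻¹({(a, c)}) = N⁺_{a,c}; that is, Joyce's piecewise smooth map F⁺ is a fibration of ℂ³ whose fibers are exactly the sets N⁺_{a,c}. -/

import Mathlib

/-!
Write `u = z₁z₂`, `w = z₃ - c` and `m = max(|z₁|, |z₂|)`, so that `|u| = m · min(|z₁|, |z₂|)`.
Away from `z₁ = z₂ = 0` the map `F⁺` divides by `m`, and `F⁺(z) = (a, c)` says
`|z₁|² - |z₂|² = 2a` and `w = conj(u) / m`. Given the first equation, the second equation of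
`N⁺_{a,c}` reduces to `|w| = min(|z₁|, |z₂|) = |u| / m`, and a complex number `w` has
`|w| = |u| / m` and `u w ≥ 0` exactly when `w = conj(u) / m`.
-/

open Complex

/-- Joyce's set `N⁺_{a,c}`. -/
noncomputable def NplusC (a : ℝ) (c : ℂ) : Set (Fin 3 → ℂ) :=
  {z : Fin 3 → ℂ |
    ‖z 0‖ ^ 2 - a = ‖z 1‖ ^ 2 + a ∧
    ‖z 1‖ ^ 2 + a = ‖z 2 - c‖ ^ 2 + |a| ∧
    (z 0 * z 1 * (z 2 - c)).im = 0 ∧ 0 ≤ (z 0 * z 1 * (z 2 - c)).re}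

/-- Joyce's piecewise smooth map `F⁺ : ℂ³ → ℝ × ℂ`. -/
noncomputable def Fplus (z : Fin 3 → ℂ) : ℝ × ℂ :=
  (1 / 2 * (‖z 0‖ ^ 2 - ‖z 1‖ ^ 2),
    if z 0 = 0 ∧ z 1 = 0 then z 2
    else if ‖z 1‖ ≤ ‖z 0‖ then
      z 2 - (starRingEnd ℂ) (z 0) * (starRingEnd ℂ) (z 1) / (‖z 0‖ : ℂ)
    else
      z 2 - (starRingEnd ℂ) (z 0) * (starRingEnd ℂ) (z 1) / (‖z 1‖ : ℂ))

open ComplexConjugate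

lemma mul_div_max_eq_min {α : Type*} [Field α] [LinearOrder α] [IsStrictOrderedRing α]
    {a b : α} (ha : 0 ≤ a) (hb : 0 ≤ b) : a * b / max a b = min a b := by
  rcases eq_or_ne (max a b) 0 with h | h
  · obtain ⟨rfl, rfl⟩ : a = 0 ∧ b = 0 := by
      rw [max_eq_iff] at h
      constructor <;> rcases h with ⟨h, h'⟩ | ⟨h, h'⟩ <;> linarith
    simp
  · rw [← min_mul_max, mul_div_cancel_right₀ _ h]

lemma sq_add_eq_sq_add_abs_iff {p q t a : ℝ} (hp : 0 ≤ p) (hq : 0 ≤ q) (ht : 0 ≤ t)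
    (h : p ^ 2 - a = q ^ 2 + a) : q ^ 2 + a = t ^ 2 + |a| ↔ t = min p q := by
  rcases le_total 0 a with ha | ha
  · have hqp : q ≤ p := by nlinarith
    rw [abs_of_nonneg ha, min_eq_right hqp, add_left_inj, eq_comm, sq_eq_sq₀ ht hq]
  · have hpq : p ≤ q := by nlinarith
    rw [abs_of_nonpos ha, min_eq_left hpq, ← sq_eq_sq₀ ht hp]
    constructor <;> intro <;> linarith

open ComplexOrder in
lemma Complex.eq_conj_div_iff {u w : ℂ} {r : ℝ} (hr : 0 ≤ r) :
    w = conj u / r ↔ ‖w‖ = ‖u‖ / r ∧ (u * w).im = 0 ∧ 0 ≤ (u * w).re := by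
  have hu : u * conj u = ((‖u‖ ^ 2 : ℝ) : ℂ) := by rw [mul_conj, normSq_eq_norm_sq]
  constructor
  · rintro rfl
    rw [mul_div_assoc', hu, ← ofReal_div, ofReal_re, ofReal_im, norm_div, norm_conj, norm_real,
      Real.norm_of_nonneg hr]
    exact ⟨rfl, rfl, by positivity⟩
  · rintro ⟨hnorm, him, hre⟩
    rcases eq_or_ne u 0 with rfl | hu0
    · simpa using hnorm
    have huw : u * w = ((‖u‖ * ‖w‖ : ℝ) : ℂ) := by
      rw [← norm_mul]
      exact eq_coe_norm_of_nonneg (nonneg_iff.2 ⟨hre, him.symm⟩)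
    apply mul_left_cancel₀ hu0
    rw [huw, hnorm, mul_div_assoc' u, hu]
    push_cast
    ring

/-- At `z 0 = z 1 = 0` the quotient is `0 / 0 = 0`, so the three branches of `Fplus` merge. -/
lemma Fplus_eq (z : Fin 3 → ℂ) :
    Fplus z = (1 / 2 * (‖z 0‖ ^ 2 - ‖z 1‖ ^ 2),
      z 2 - conj (z 0 * z 1) / (max ‖z 0‖ ‖z 1‖ : ℝ)) := by
  unfold Fplus
  split_ifs with h0 hle
  · simp [h0.1, h0.2]
  · rw [max_eq_left hle, map_mul]
  · rw [max_eq_right (le_of_not_ge hle), map_mul]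

/-- The fibers of Joyce's map `F⁺` are exactly the sets `N⁺_{a,c}`. -/
theorem Fplus_fiber (a : ℝ) (c : ℂ) :
    Fplus ⁻¹' {(a, c)} = NplusC a c := by
  ext z
  have hfst : 1 / 2 * (‖z 0‖ ^ 2 - ‖z 1‖ ^ 2) = a ↔ ‖z 0‖ ^ 2 - a = ‖z 1‖ ^ 2 + a := by
    constructor <;> intro <;> linarith
  have hsnd : z 2 - conj (z 0 * z 1) / (max ‖z 0‖ ‖z 1‖ : ℝ) = c ↔
      ‖z 2 - c‖ = min ‖z 0‖ ‖z 1‖ ∧ (z 0 * z 1 * (z 2 - c)).im = 0 ∧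
        0 ≤ (z 0 * z 1 * (z 2 - c)).re := by
    rw [sub_eq_iff_comm, eq_conj_div_iff (le_max_of_le_left (norm_nonneg _)), norm_mul,
      mul_div_max_eq_min (norm_nonneg _) (norm_nonneg _)]
  simp only [Set.mem_preimage, Set.mem_singleton_iff, Fplus_eq, Prod.mk.injEq, NplusC,
    Set.mem_ofPred_eq, hfst, hsnd]
  refine and_congr_right fun h => and_congr_left fun _ => ?_
  rw [sq_add_eq_sq_add_abs_iff (norm_nonneg _) (norm_nonneg _) (norm_nonneg _) h]
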